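/- For the noisy GHZ state ρ(x) = (x/8) I₈ + (1−x) |GHZ⟩⟨GHZ| on ℂ²⊗ℂ²⊗ℂ², where |GHZ⟩ = (|000⟩ + |111⟩)/√2 and 0 ≤ x ≤ 1, the trace norm of ρ(x) minus its partial transpose over any single qubit equals 2 − 2x: ‖ρ(x) − ρ(x)^{T₂}‖_tr = 2 − 2x. -/

import Mathlib

open Matrix
open scoped ComplexOrder

/-- The positive semidefinite square root (removed from Mathlib; old definition restored). -/
noncomputable def Matrix.PosSemidef.sqrt {𝕜 : Type*} [RCLike 𝕜] {n : Type*} [Fintype n]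
    [DecidableEq n] {A : Matrix n n 𝕜} (hA : A.PosSemidef) : Matrix n n 𝕜 :=
  hA.1.eigenvectorUnitary.1 * diagonal ((↑) ∘ (√·) ∘ hA.1.eigenvalues) *
    (star hA.1.eigenvectorUnitary : Matrix n n 𝕜)

noncomputable def traceNorm {𝕜 : Type*} [RCLike 𝕜] {m n : Type*} [Fintype m] [Fintype n]
    [DecidableEq n] (B : Matrix m n 𝕜) : ℝ :=
  RCLike.re (Matrix.posSemidef_conjTranspose_mul_self B).sqrt.trace

abbrev Q3 := Fin 2 × Fin 2 × Fin 2

/-- Partial transpose on the second qubit. -/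
def ptB (M : Matrix Q3 Q3 ℂ) : Matrix Q3 Q3 ℂ :=
  fun p q => M (p.1, q.2.1, p.2.2) (q.1, p.2.1, q.2.2)

/-- The GHZ vector `(|000⟩+|111⟩)/√2`. -/
noncomputable def ghz : Q3 → ℂ :=
  fun v => if v.1 = v.2.1 ∧ v.2.1 = v.2.2 then (1 / Real.sqrt 2 : ℝ) else 0

/-- The noisy GHZ state `ρ(x) = (x/8) I₈ + (1−x)|GHZ⟩⟨GHZ|`. -/
noncomputable def noisyGHZ (x : ℝ) : Matrix Q3 Q3 ℂ :=
  ((x : ℂ) / 8) • (1 : Matrix Q3 Q3 ℂ) +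
    ((1 : ℂ) - x) • Matrix.vecMulVec ghz (star ghz)


/-!
Write `c = (1 - x) / 2`. The identity part of `ρ(x)` is invariant under the partial transpose, and
the partial transpose of `|GHZ⟩⟨GHZ|` moves its two coherences `|000⟩⟨111|`, `|111⟩⟨000|` to
`|010⟩⟨101|`, `|101⟩⟨010|`. Hence `ρ(x) - ρ(x)^{T₂} = c • S` with `S` a signed partial permutation
matrix, so `(c • S)ᴴ (c • S) = c² P` for the diagonal projection `P` onto those four basis
states. Its square root is `c P`, whose trace is `4 c = 2 - 2x`.
-/

section TraceNorm

variable {𝕜 : Type*} [RCLike 𝕜] {m n : Type*} [Fintype m] [Fintype n] [DecidableEq n]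

open scoped MatrixOrder in
theorem Matrix.PosSemidef.sqrt_eq_of_sq_eq {A B : Matrix n n 𝕜} (hA : A.PosSemidef)
    (hB : B.PosSemidef) (h : B ^ 2 = A) : hA.sqrt = B := by
  have hA_sqrt : hA.sqrt = CFC.sqrt A := by
    rw [CFC.sqrt_eq_real_sqrt A hA.nonneg, cfcₙ_eq_cfc, hA.1.cfc_eq, IsHermitian.cfc,
      Matrix.PosSemidef.sqrt, Unitary.conjStarAlgAut_apply]
  rw [hA_sqrt, ← h, CFC.sqrt_sq B hB.nonneg]

theorem traceNorm_eq_sum_of_conjTranspose_mul_self_eq_diagonal {B : Matrix m n 𝕜} {r : n → ℝ}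
    (hr : ∀ i, 0 ≤ r i) (hB : Bᴴ * B = diagonal fun i => ((r i ^ 2 : ℝ) : 𝕜)) :
    traceNorm B = ∑ i, r i := by
  have hD : (diagonal fun i => (r i : 𝕜)).PosSemidef :=
    posSemidef_diagonal_iff.mpr fun i => RCLike.ofReal_nonneg.mpr (hr i)
  have hD_sq : (diagonal fun i => (r i : 𝕜)) ^ 2 = Bᴴ * B := by
    rw [hB, sq, diagonal_mul_diagonal]
    simp only [sq, RCLike.ofReal_mul]
  rw [traceNorm, (posSemidef_conjTranspose_mul_self B).sqrt_eq_of_sq_eq hD hD_sq, trace_diagonal,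
    ← RCLike.ofReal_sum, RCLike.ofReal_re]

end TraceNorm

theorem ptB_add (M N : Matrix Q3 Q3 ℂ) : ptB (M + N) = ptB M + ptB N := rfl

theorem ptB_smul (c : ℂ) (M : Matrix Q3 Q3 ℂ) : ptB (c • M) = c • ptB M := rfl

theorem ptB_one : ptB 1 = 1 := by
  ext ⟨a, b, c⟩ ⟨d, e, f⟩
  simp only [ptB, one_apply, Prod.mk.injEq]
  grind

theorem ptB_single (a b c d e f : Fin 2) (z : ℂ) :
    ptB (single (a, b, c) (d, e, f) z) = single (a, e, c) (d, b, f) z := by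
  ext ⟨a', b', c'⟩ ⟨d', e', f'⟩
  simp only [ptB, single_apply, Prod.mk.injEq]
  grind

theorem vecMulVec_ghz : vecMulVec ghz (star ghz) = (1 / 2 : ℂ) •
    (single (0, 0, 0) (0, 0, 0) 1 + single (0, 0, 0) (1, 1, 1) 1 +
      single (1, 1, 1) (0, 0, 0) 1 + single (1, 1, 1) (1, 1, 1) 1) := by
  have h_half : ((√2 : ℝ) : ℂ)⁻¹ * ((√2 : ℝ) : ℂ)⁻¹ = 2⁻¹ := by
    rw [← mul_inv, ← Complex.ofReal_mul, Real.mul_self_sqrt zero_le_two, Complex.ofReal_ofNat]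
  ext ⟨a, b, c⟩ ⟨d, e, f⟩
  fin_cases a <;> fin_cases b <;> fin_cases c <;> fin_cases d <;> fin_cases e <;> fin_cases f <;>
    simp [vecMulVec_apply, ghz, h_half]

def ghzPTDefect : Matrix Q3 Q3 ℂ :=
  single (0, 0, 0) (1, 1, 1) 1 + single (1, 1, 1) (0, 0, 0) 1 -
    single (0, 1, 0) (1, 0, 1) 1 - single (1, 0, 1) (0, 1, 0) 1

def ghzPTSupport : Finset Q3 := {(0, 0, 0), (1, 1, 1), (0, 1, 0), (1, 0, 1)}

theorem vecMulVec_ghz_sub_ptB :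
    vecMulVec ghz (star ghz) - ptB (vecMulVec ghz (star ghz)) = (1 / 2 : ℂ) • ghzPTDefect := by
  simp only [vecMulVec_ghz, ptB_smul, ptB_add, ptB_single, ghzPTDefect]
  module

theorem noisyGHZ_sub_ptB (x : ℝ) :
    noisyGHZ x - ptB (noisyGHZ x) = (((1 - x) / 2 : ℝ) : ℂ) • ghzPTDefect := by
  rw [noisyGHZ, ptB_add, ptB_smul, ptB_smul, ptB_one, add_sub_add_left_eq_sub, ← smul_sub,
    vecMulVec_ghz_sub_ptB, smul_smul]
  push_cast
  ring_nf

theorem ghzPTDefect_conjTranspose_mul_self :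
    ghzPTDefectᴴ * ghzPTDefect = diagonal fun i => if i ∈ ghzPTSupport then 1 else 0 := by
  simp (disch := decide) only [ghzPTDefect, conjTranspose_add, conjTranspose_sub,
    conjTranspose_single, star_one, add_mul, sub_mul, mul_add, mul_sub, single_mul_single_same,
    single_mul_single_of_ne, mul_one, add_zero, zero_add, sub_zero, zero_sub, sub_neg_eq_add,
    ← diagonal_single, diagonal_add]
  congr 1
  funext i
  fin_cases i <;> simp [ghzPTSupport]

theorem traceNorm_noisyGHZ_pt_general (x : ℝ) (hx1 : x ≤ 1) :
    traceNorm (noisyGHZ x - ptB (noisyGHZ x)) = 2 - 2 * x := by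
  set c : ℝ := (1 - x) / 2 with hc
  have hc_nonneg : 0 ≤ c := by linarith
  have h_sq : ((c : ℂ) • ghzPTDefect)ᴴ * ((c : ℂ) • ghzPTDefect) =
      diagonal fun i => (((if i ∈ ghzPTSupport then c else 0) ^ 2 : ℝ) : ℂ) := by
    rw [conjTranspose_smul, Complex.star_def, Complex.conj_ofReal, smul_mul, Matrix.mul_smul,
      ghzPTDefect_conjTranspose_mul_self, smul_smul, ← diagonal_smul]
    congr 1
    funext i
    by_cases hi : i ∈ ghzPTSupport <;> simp [hi, sq]
  have h_card : ghzPTSupport.card = 4 := rfl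
  rw [noisyGHZ_sub_ptB, traceNorm_eq_sum_of_conjTranspose_mul_self_eq_diagonal
      (fun i => by split_ifs <;> simp [hc_nonneg]) h_sq,
    Finset.sum_ite_mem, Finset.univ_inter, Finset.sum_const, h_card, nsmul_eq_mul, hc]
  ring

/-- `‖ρ(x) − ρ(x)^{T₂}‖_tr = 2 − 2x` for the noisy GHZ state. -/
theorem traceNorm_noisyGHZ_pt (x : ℝ) (hx0 : 0 ≤ x) (hx1 : x ≤ 1) :
    traceNorm (noisyGHZ x - ptB (noisyGHZ x)) = 2 - 2 * x :=
  traceNorm_noisyGHZ_pt_general x hx1
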